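/- arXiv:math/9403210 — 2 statements merged into one kernel-verified Lean document; each statement's English description precedes it below -/
import Mathlib

section
/- A real Banach space X has the λ-bounded compact approximation property (λ-BCAP) if and only if the Banach algebra 𝒦(X) of compact operators on X has a λ-bounded left approximate identity (λ-BLAI). -/
set_option maxSynthPendingDepth 3

open Filter Topology Metric NormedSpace Function

/-- `u` is a finite-rank operator: its range is finite-dimensional. -/
def FinRankOp {X Y : Type*} [NormedAddCommGroup X] [NormedSpace ℝ X]
    [NormedAddCommGroup Y] [NormedSpace ℝ Y] (u : X →L[ℝ] Y) : Prop :=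
  FiniteDimensional ℝ (LinearMap.range (u : X →ₗ[ℝ] Y))

/-- `u` is approximable: a limit in operator norm of finite-rank operators. -/
def ApproxOp {X Y : Type*} [NormedAddCommGroup X] [NormedSpace ℝ X]
    [NormedAddCommGroup Y] [NormedSpace ℝ Y] (u : X →L[ℝ] Y) : Prop :=
  u ∈ closure {f : X →L[ℝ] Y | FinRankOp f}

/-- `u` is a compact operator: it maps the closed unit ball to a relatively compact set. -/
def CompactOp {X Y : Type*} [NormedAddCommGroup X] [NormedSpace ℝ X]
    [NormedAddCommGroup Y] [NormedSpace ℝ Y] (u : X →L[ℝ] Y) : Prop :=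
  IsCompact (closure (u '' Metric.closedBall 0 1))

/-- `Y` has the λ-bounded compact approximation property (λ-BCAP). -/
def HasBCAP (Y : Type*) [NormedAddCommGroup Y] [NormedSpace ℝ Y] (l : ℝ) : Prop :=
  ∀ K : Set Y, IsCompact K → ∀ ε : ℝ, 0 < ε →
    ∃ u : Y →L[ℝ] Y, CompactOp u ∧ ‖u‖ ≤ l ∧ ∀ x ∈ K, ‖u x - x‖ < ε

/-- The Banach algebra 𝒦(X) of compact operators on `X` has a λ-bounded left approximate
identity: a net `(e i)` of compact operators with `‖e i‖ ≤ λ` such that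
`‖e i * x - x‖ → 0` for every compact operator `x` (multiplication is composition). -/
def CompactAlgHasBLAI (X : Type u) [NormedAddCommGroup X] [NormedSpace ℝ X] (l : ℝ) : Prop :=
  ∃ (ι : Type u) (_ : Preorder ι) (_ : Nonempty ι) (_ : IsDirected ι (· ≤ ·))
    (e : ι → X →L[ℝ] X),
    (∀ i, CompactOp (e i) ∧ ‖e i‖ ≤ l) ∧
    ∀ x : X →L[ℝ] X, CompactOp x →
      Tendsto (fun i => ‖(e i).comp x - x‖) atTop (𝓝 (0 : ℝ))

/-!
If `X` has the λ-BCAP, choose for each compact `K` and each `n` an operator of norm `≤ λ` that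
moves no point of `K` by more than `1 / (n + 1)`; directed by `(K, n)`, these form a left
approximate identity, since a compact `x` maps the unit ball into the compact set
`closure (x '' closedBall 0 1)`, on which the net is eventually uniformly close to the identity.
Conversely, every vector is fixed by a rank-one (hence compact) operator `x`, so a left
approximate identity converges to the identity pointwise; being bounded by `λ`, it is
equicontinuous, so the convergence is uniform on compact sets, which is the λ-BCAP.
-/

open TopologicalSpace

variable {X Y : Type*} [NormedAddCommGroup X] [NormedSpace ℝ X]
  [NormedAddCommGroup Y] [NormedSpace ℝ Y]

theorem compactOp_iff_isCompactOperator (u : X →L[ℝ] Y) : CompactOp u ↔ IsCompactOperator u :=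
  (isCompactOperator_iff_isCompact_closure_image_closedBall (u : X →ₗ[ℝ] Y) one_pos).symm

theorem compactOp_smulRight (g : StrongDual ℝ X) (y : Y) : CompactOp (g.smulRight y) :=
  (compactOp_iff_isCompactOperator _).2 <|
    (isCompactOperator_of_locallyCompactSpace_dom g).clm_comp ((1 : ℝ →L[ℝ] ℝ).smulRight y)

theorem exists_compactOp_apply_eq (y : X) : ∃ x : X →L[ℝ] X, CompactOp x ∧ x y = y := by
  rcases eq_or_ne y 0 with rfl | hy
  · exact ⟨0, (compactOp_iff_isCompactOperator _).2 isCompactOperator_zero, rfl⟩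
  · obtain ⟨g, hg⟩ := SeparatingDual.exists_eq_one (R := ℝ) hy
    exact ⟨g.smulRight y, compactOp_smulRight g y, by simp [hg]⟩

theorem norm_comp_sub_le_of_forall_mem_image (u : Y →L[ℝ] Y) (x : X →L[ℝ] Y) {ε : ℝ}
    (hε : 0 ≤ ε) (h : ∀ y ∈ x '' closedBall 0 1, ‖u y - y‖ ≤ ε) : ‖u.comp x - x‖ ≤ ε :=
  ContinuousLinearMap.opNorm_le_of_unit_norm hε fun v hv =>
    h (x v) ⟨v, mem_closedBall_zero_iff.2 hv.le, rfl⟩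

theorem tendsto_apply_of_tendsto_norm_comp_sub {ι : Type*} {F : Filter ι} {e : ι → Y →L[ℝ] Y}
    {x : X →L[ℝ] Y} (h : Tendsto (fun i => ‖(e i).comp x - x‖) F (𝓝 0)) (v : X) :
    Tendsto (fun i => e i (x v)) F (𝓝 (x v)) := by
  rw [tendsto_iff_norm_sub_tendsto_zero]
  refine squeeze_zero (fun _ => norm_nonneg _) (fun i => ?_) (by simpa using h.mul_const ‖v‖)
  exact ((e i).comp x - x).le_opNorm v

theorem tendstoUniformlyOn_of_tendsto_apply {ι : Type*} {F : Filter ι} {e : ι → X →L[ℝ] Y}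
    {f : X → Y} {C : ℝ} (hC : ∀ i, ‖e i‖ ≤ C) (h : ∀ x, Tendsto (fun i => e i x) F (𝓝 (f x)))
    {K : Set X} (hK : IsCompact K) : TendstoUniformlyOn (fun i => ⇑(e i)) f F K := by
  have : CompactSpace K := isCompact_iff_compactSpace.mp hK
  have heq : Equicontinuous ((↑) ∘ e) :=
    ((NormedSpace.equicontinuous_TFAE e).out 5 1).1 (show ∃ C, ∀ i, ‖e i‖ ≤ C from ⟨C, hC⟩)
  rw [tendstoUniformlyOn_iff_tendstoUniformly_comp_coe]
  exact UniformFun.tendsto_iff_tendstoUniformly.1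
    ((((equicontinuous_restrict_iff _).2 (heq.equicontinuousOn K)).tendsto_uniformFun_iff_pi F _).2
      (tendsto_pi_nhds.2 fun x => h x))

theorem HasBCAP.compactAlgHasBLAI {l : ℝ} (h : HasBCAP X l) : CompactAlgHasBLAI X l := by
  choose u hu_compact hu_norm hu_approx using fun (K : Compacts X) (n : ℕ) =>
    h K K.isCompact (1 / (n + 1)) Nat.one_div_pos_of_nat
  refine ⟨Compacts X × ℕ, inferInstance, inferInstance, inferInstance,
    fun p => u p.1 p.2, fun p => ⟨hu_compact _ _, hu_norm _ _⟩, fun x hx => ?_⟩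
  let K : Compacts X := ⟨closure (x '' closedBall 0 1), hx⟩
  have h_snd : Tendsto (fun p : Compacts X × ℕ => 1 / ((p.2 : ℝ) + 1)) atTop (𝓝 0) := by
    rw [← prod_atTop_atTop_eq]
    exact tendsto_one_div_add_atTop_nhds_zero_nat.comp tendsto_snd
  refine squeeze_zero' (Eventually.of_forall fun _ => norm_nonneg _) ?_ h_snd
  filter_upwards [eventually_ge_atTop (K, 0)] with p hp
  exact norm_comp_sub_le_of_forall_mem_image _ _ Nat.one_div_pos_of_nat.le
    fun y hy => (hu_approx _ _ y (hp.1 (subset_closure hy))).le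

theorem CompactAlgHasBLAI.hasBCAP {l : ℝ} (h : CompactAlgHasBLAI X l) : HasBCAP X l := by
  obtain ⟨ι, _, _, _, e, he, hconv⟩ := h
  intro K hK ε hε
  have h_pointwise : ∀ y, Tendsto (fun i => e i y) atTop (𝓝 y) := fun y => by
    obtain ⟨x, hx, hxy⟩ := exists_compactOp_apply_eq y
    simpa [hxy] using tendsto_apply_of_tendsto_norm_comp_sub (hconv x hx) y
  obtain ⟨i, hi⟩ := (Metric.tendstoUniformlyOn_iff.1
    (tendstoUniformlyOn_of_tendsto_apply (fun i => (he i).2) h_pointwise hK) ε hε).exists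
  exact ⟨e i, (he i).1, (he i).2, fun x hx => by simpa [dist_eq_norm'] using hi x hx⟩

theorem bcap_iff_compact_blai_general (X : Type u) [NormedAddCommGroup X] [NormedSpace ℝ X]
    (l : ℝ) :
    HasBCAP X l ↔ CompactAlgHasBLAI X l :=
  ⟨HasBCAP.compactAlgHasBLAI, CompactAlgHasBLAI.hasBCAP⟩

/-- Theorem A (compact case): `X` has λ-BCAP iff 𝒦(X) has a λ-BLAI. -/
theorem bcap_iff_compact_blai (X : Type u) [NormedAddCommGroup X] [NormedSpace ℝ X]
    [CompleteSpace X] (l : ℝ) (hl : 1 ≤ l) :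
    HasBCAP X l ↔ CompactAlgHasBLAI X l :=
  bcap_iff_compact_blai_general X l
end

section
/- Let (X_n)_{n∈ℕ} be a sequence of real Banach spaces each having the metric compact approximation property (MCAP). Then the ℓ₂-direct sum (Σ_{n=1}^∞ ⊕ X_n)_{ℓ₂} — the space of all sequences (x_n) with x_n ∈ X_n and Σ_n ‖x_n‖² < ∞, normed by (Σ_n ‖x_n‖²)^{1/2} — also has MCAP. -/
set_option maxSynthPendingDepth 3

open Filter Topology Metric NormedSpace Function

/-- `Y` has the approximation property (AP). -/
def HasAP (Y : Type*) [NormedAddCommGroup Y] [NormedSpace ℝ Y] : Prop :=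
  ∀ K : Set Y, IsCompact K → ∀ ε : ℝ, 0 < ε →
    ∃ u : Y →L[ℝ] Y, FinRankOp u ∧ ∀ x ∈ K, ‖u x - x‖ < ε

/-- `Y` has the λ-bounded approximation property (λ-BAP). -/
def HasBAP (Y : Type*) [NormedAddCommGroup Y] [NormedSpace ℝ Y] (l : ℝ) : Prop :=
  ∀ K : Set Y, IsCompact K → ∀ ε : ℝ, 0 < ε →
    ∃ u : Y →L[ℝ] Y, FinRankOp u ∧ ‖u‖ ≤ l ∧ ∀ x ∈ K, ‖u x - x‖ < ε

/-- `Y` has the metric compact approximation property (MCAP), i.e. 1-BCAP. -/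
def HasMCAP (Y : Type*) [NormedAddCommGroup Y] [NormedSpace ℝ Y] : Prop :=
  HasBCAP Y 1

/-! Let `K ⊆ ℓ_p(E)` be compact and `ε > 0`. The norms of the tails `x - ∑_{i ∈ s} xᵢ` decrease
to `0` as `s` grows, so by Dini's theorem they are uniformly `< ε/2` on `K` for one finite `s`.
For `i ∈ s` pick a compact contraction `vᵢ` of `Eᵢ` approximating the identity on the compact
coordinate projection of `K`. The block-diagonal operator `⊕_{i ∈ s} vᵢ` is compact as a finite
sum of compact operators, is a contraction because the `ℓ_p` norm is computed coordinatewise,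
and moves every point of `K` by less than `ε`. -/

open scoped ENNReal

namespace lp

variable {α : Type*} [DecidableEq α] {E : α → Type*} [∀ i, NormedAddCommGroup (E i)]
  {p : ℝ≥0∞} [Fact (1 ≤ p)]

theorem exists_forall_norm_sub_sum_single_lt (hp : p ≠ ∞) {K : Set (lp E p)} (hK : IsCompact K)
    {ε : ℝ} (hε : 0 < ε) : ∃ s : Finset α, ∀ x ∈ K, ‖x - ∑ i ∈ s, lp.single p i (x i)‖ < ε := by
  have hp' : 0 < p.toReal := ENNReal.toReal_pos (zero_lt_one.trans_le Fact.out).ne' hp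
  set F : Finset α → lp E p → ℝ := fun s x => ‖x - ∑ i ∈ s, lp.single p i (x i)‖
  have hF_cont (s : Finset α) : Continuous (F s) :=
    continuous_norm.comp <| continuous_id.sub <| continuous_finsetSum _ fun i _ =>
      (isometry_single i).continuous.comp (lipschitzWith_one_eval p i).continuous
  have hF_anti (x : lp E p) : Antitone (F · x) := fun s t hst => by
    rw [← Real.rpow_le_rpow_iff (norm_nonneg _) (norm_nonneg _) hp', lp.norm_compl_sum_single hp',
      lp.norm_compl_sum_single hp']
    gcongr
  have hF_tendsto (x : lp E p) : Tendsto (F · x) atTop (𝓝 0) := by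
    have := lp.hasSum_single hp x
    rw [HasSum, SummationFilter.unconditional_filter, tendsto_iff_norm_sub_tendsto_zero] at this
    simpa only [norm_sub_rev] using this
  have := Antitone.tendstoUniformlyOn_of_forall_tendsto hK (fun s => (hF_cont s).continuousOn)
    (fun x _ => hF_anti x) continuousOn_const (fun x _ => hF_tendsto x)
  obtain ⟨s, hs⟩ := (Metric.tendstoUniformlyOn_iff.1 this ε hε).exists
  exact ⟨s, fun x hx => by simpa [F] using hs x hx⟩

section BlockDiag

variable {𝕜 : Type*} [NontriviallyNormedField 𝕜] [∀ i, NormedSpace 𝕜 (E i)]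

variable (p) in
noncomputable def blockDiag (s : Finset α) (v : ∀ i, E i →L[𝕜] E i) : lp E p →L[𝕜] lp E p :=
  ∑ i ∈ s, singleContinuousLinearMap 𝕜 E p i ∘L v i ∘L evalCLM 𝕜 E p i

theorem blockDiag_apply (s : Finset α) (v : ∀ i, E i →L[𝕜] E i) (x : lp E p) :
    blockDiag p s v x = ∑ i ∈ s, lp.single p i (v i (x i)) := by
  simp [blockDiag, evalCLM]

theorem isCompactOperator_blockDiag {s : Finset α} {v : ∀ i, E i →L[𝕜] E i}
    (hv : ∀ i ∈ s, IsCompactOperator (v i)) : IsCompactOperator (blockDiag p s v) :=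
  Submodule.sum_mem (compactOperator _ _ _) fun i hi =>
    ((hv i hi).comp_clm (evalCLM 𝕜 E p i)).clm_comp (singleContinuousLinearMap 𝕜 E p i)

theorem norm_blockDiag_le (hp : p ≠ ∞) {s : Finset α} {v : ∀ i, E i →L[𝕜] E i}
    (hv : ∀ i ∈ s, ‖v i‖ ≤ 1) : ‖blockDiag p s v‖ ≤ 1 := by
  have hp' : 0 < p.toReal := ENNReal.toReal_pos (zero_lt_one.trans_le Fact.out).ne' hp
  refine ContinuousLinearMap.opNorm_le_bound _ zero_le_one fun x => ?_
  rw [one_mul, blockDiag_apply, ← Real.rpow_le_rpow_iff (norm_nonneg _) (norm_nonneg _) hp',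
    lp.norm_sum_single hp']
  calc ∑ i ∈ s, ‖v i (x i)‖ ^ p.toReal ≤ ∑ i ∈ s, ‖x i‖ ^ p.toReal := by
        gcongr with i hi
        exact (v i).le_of_opNorm_le (hv i hi) _ |>.trans_eq (one_mul _)
    _ ≤ ‖x‖ ^ p.toReal := sum_rpow_le_norm_rpow hp' x s

theorem norm_blockDiag_apply_sub_sum_single_le (s : Finset α) (v : ∀ i, E i →L[𝕜] E i)
    (x : lp E p) :
    ‖blockDiag p s v x - ∑ i ∈ s, lp.single p i (x i)‖ ≤ ∑ i ∈ s, ‖v i (x i) - x i‖ := by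
  rw [blockDiag_apply, ← Finset.sum_sub_distrib]
  refine (norm_sum_le _ _).trans_eq (Finset.sum_congr rfl fun i _ => ?_)
  rw [← lp.single_sub, lp.norm_single (zero_lt_one.trans_le Fact.out)]

end BlockDiag

end lp

theorem compactOp_iff_isCompactOperator_s19 {A B : Type*} [NormedAddCommGroup A] [NormedSpace ℝ A]
    [NormedAddCommGroup B] [NormedSpace ℝ B] (u : A →L[ℝ] B) : CompactOp u ↔ IsCompactOperator u :=
  (isCompactOperator_iff_isCompact_closure_image_closedBall (u : A →ₗ[ℝ] B) one_pos).symm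

theorem hasMCAP_lp {α : Type*} {E : α → Type*} [∀ i, NormedAddCommGroup (E i)]
    [∀ i, NormedSpace ℝ (E i)] {p : ℝ≥0∞} [Fact (1 ≤ p)] (hp : p ≠ ∞) (h : ∀ i, HasMCAP (E i)) :
    HasMCAP (lp E p) := by
  classical
  intro K hK ε hε
  obtain ⟨s, hs⟩ := lp.exists_forall_norm_sub_sum_single_lt hp hK (half_pos hε)
  set δ := ε / (2 * (s.card + 1))
  have hδ : s.card * δ ≤ ε / 2 := by
    rw [mul_div_assoc', div_le_div_iff₀ (by positivity) two_pos]
    nlinarith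
  choose v hv_compact hv_norm hv_approx using fun i =>
    h i _ (hK.image (lp.evalCLM ℝ E p i).continuous) δ (by positivity)
  refine ⟨lp.blockDiag p s v, (compactOp_iff_isCompactOperator_s19 _).2 <|
    lp.isCompactOperator_blockDiag fun i _ => (compactOp_iff_isCompactOperator_s19 _).1 (hv_compact i),
    lp.norm_blockDiag_le hp fun i _ => hv_norm i, fun x hx => ?_⟩
  have hx_approx (i : α) : ‖v i (x i) - x i‖ < δ := hv_approx i (x i) ⟨x, hx, rfl⟩
  calc ‖lp.blockDiag p s v x - x‖
      ≤ ‖lp.blockDiag p s v x - ∑ i ∈ s, lp.single p i (x i)‖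
        + ‖∑ i ∈ s, lp.single p i (x i) - x‖ := norm_sub_le_norm_sub_add_norm_sub _ _ _
    _ < ε / 2 + ε / 2 := by
      refine add_lt_add_of_le_of_lt ?_ (by rw [norm_sub_rev]; exact hs x hx)
      calc _ ≤ ∑ i ∈ s, ‖v i (x i) - x i‖ := lp.norm_blockDiag_apply_sub_sum_single_le s v x
        _ ≤ s.card * δ := by simpa using Finset.sum_le_card_nsmul s _ δ fun i _ => (hx_approx i).le
        _ ≤ ε / 2 := hδ
    _ = ε := add_halves ε

theorem mcap_of_l2_sum_general (X : ℕ → Type u) [∀ n, NormedAddCommGroup (X n)]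
    [∀ n, NormedSpace ℝ (X n)]
    (h : ∀ n, HasMCAP (X n)) : HasMCAP (lp X 2) :=
  hasMCAP_lp ENNReal.ofNat_ne_top h

/-- The ℓ₂-direct sum of a sequence of Banach spaces with MCAP has MCAP.  Here
`lp X 2` is the space of sequences `(x n)` with `x n ∈ X n` and `∑ ‖x n‖² < ∞`,
with norm `(∑ ‖x n‖²)^(1/2)`. -/
theorem mcap_of_l2_sum (X : ℕ → Type u) [∀ n, NormedAddCommGroup (X n)]
    [∀ n, NormedSpace ℝ (X n)] [∀ n, CompleteSpace (X n)]
    (h : ∀ n, HasMCAP (X n)) : HasMCAP (lp X 2) :=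
  mcap_of_l2_sum_general X h
end
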